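/- For positive integers n, k, t, r, s with 1 ≤ r ≤ k, the number of k-tuples (α¹, …, αᵏ) of overpartitions of total weight n with exactly s overlined parts, such that max_i ℓ(αⁱ) = t and r is the largest index i with ℓ(αⁱ) = t, equals the number of unrestricted Schmidt k-overpartitions of n with exactly s overlined parts and length (t−1)k+r. -/

import Mathlib

/-- Sum of the parts of `l` in positions `1, k+1, 2k+1, …` (0-indexed `0, k, 2k, …`). -/
def schmidtSum (k : ℕ) (l : List ℕ) : ℕ :=
  ∑ i ∈ Finset.range l.length, if i % k = 0 then l.getD i 0 else 0

/-- A strict overpartition, encoded as a list of (part, overlined?) pairs: the parts are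
positive and strictly decreasing, and the `i`-th part may be overlined only if it exceeds
the next part by at least 2 or it is the last part. -/
def IsStrictOverpartition (l : List (ℕ × Bool)) : Prop :=
  (l.map Prod.fst).Pairwise (· > ·) ∧ (∀ x ∈ l, 0 < x.1) ∧
  ∀ i, i < l.length → (l.getD i (0, false)).2 = true →
    (i + 1 = l.length ∨ (l.getD (i + 1) (0, false)).1 + 2 ≤ (l.getD i (0, false)).1)

/-- An overpartition, encoded as a list of (part, overlined?) pairs: parts are positive
and weakly decreasing, and only the final occurrence of a part value may be overlined. -/
def IsOverpartition (l : List (ℕ × Bool)) : Prop :=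
  (l.map Prod.fst).Pairwise (· ≥ ·) ∧ (∀ x ∈ l, 0 < x.1) ∧
  ∀ i, i + 1 < l.length → (l.getD i (0, false)).2 = true →
    (l.getD (i + 1) (0, false)).1 < (l.getD i (0, false)).1

/-!
An overpartition `a₀ ≥ a₁ ≥ ⋯` of length at most `N` is recorded by its gaps `aⱼ - aⱼ₊₁`
(`j < N`, with `a_N = 0`) together with its overlines: the overpartition condition says exactly
that a part may be overlined only where the gap after it is positive, and the parts are recovered
as tail sums of the gaps. Interleaving the gap sequences of `k` overpartitions of length at most
`t` along `m = j * k + i` gives the gap sequence of a single overpartition `λ`, overlines included.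
Since `λ_{jk} = ∑_{m ≥ jk} gap_m`, the Schmidt sum `λ₀ + λ_k + λ_{2k} + ⋯` is
`∑_m (⌊m / k⌋ + 1) gap_m`, the total weight of the tuple. The last positive gap of `λ` sits at
`(t - 1) k + r - 1` exactly when the `r`-th overpartition has length `t` and the later ones are
shorter.
-/

open Finset

theorem sum_range_mul_eq_sum_fin {M : Type*} [AddCommMonoid M] (t k : ℕ) (f : ℕ → M) :
    ∑ m ∈ range (t * k), f m = ∑ i : Fin k, ∑ j ∈ range t, f (j * k + i) := by
  rw [← Fin.sum_univ_eq_sum_range, ← finProdFinEquiv.sum_comp, Fintype.sum_prod_type,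
    Finset.sum_comm]
  refine sum_congr rfl fun i _ => ?_
  rw [← Fin.sum_univ_eq_sum_range (fun j => f (j * k + i))]
  simp [finProdFinEquiv, Nat.add_comm, Nat.mul_comm]

theorem Nat.divModEquiv_mul_add {k : ℕ} [NeZero k] (j : ℕ) (i : Fin k) :
    Nat.divModEquiv k (j * k + i) = (j, i) :=
  (Nat.divModEquiv k).apply_symm_apply (j, i)

theorem Antitone.sum_Ico_tsub {f : ℕ → ℕ} (hf : Antitone f) {a b : ℕ} (hab : a ≤ b) :
    ∑ i ∈ Ico a b, (f i - f (i + 1)) = f a - f b := by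
  induction b, hab using Nat.le_induction with
  | base => simp
  | succ b hab ih =>
    rw [sum_Ico_succ_top hab, ih]
    have := hf hab
    have := hf (Nat.le_add_right b 1)
    omega

theorem sum_range_succ_boole_mod_eq_zero (k j : ℕ) :
    ∑ i ∈ range (j + 1), (if i % k = 0 then 1 else 0) = j / k + 1 := by
  induction j with
  | zero => simp only [zero_add, sum_range_one, Nat.zero_mod, Nat.zero_div, if_true]
  | succ j ih =>
    rw [sum_range_succ, ih, Nat.succ_div]
    simp only [Nat.dvd_iff_mod_eq_zero]
    split_ifs <;> rfl

theorem schmidtSum_one (l : List ℕ) : schmidtSum 1 l = l.sum := by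
  simp only [schmidtSum, Nat.mod_one, if_true]
  induction l with
  | nil => simp
  | cons x l ih =>
    simp only [List.length_cons, sum_range_succ', List.getD_cons_succ, List.getD_cons_zero, ih,
      List.sum_cons, Nat.add_comm]

namespace Overpartition

def part (l : List (ℕ × Bool)) (j : ℕ) : ℕ := (l.getD j (0, false)).1

def gapMarks (l : List (ℕ × Bool)) (j : ℕ) : ℕ × Bool :=
  (part l j - part l (j + 1), (l.getD j (0, false)).2)

structure IsGapMarks (N : ℕ) (g : ℕ → ℕ × Bool) : Prop where
  eq_of_le : ∀ j, N ≤ j → g j = (0, false)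
  pos_of_mark : ∀ j, (g j).2 = true → 0 < (g j).1

def tailSum (N : ℕ) (g : ℕ → ℕ × Bool) (j : ℕ) : ℕ := ∑ i ∈ Ico j N, (g i).1

theorem tailSum_eq_zero_of_le {N j : ℕ} {g : ℕ → ℕ × Bool} (h : N ≤ j) : tailSum N g j = 0 := by
  simp [tailSum, h]

def tailLength (N : ℕ) (g : ℕ → ℕ × Bool) : ℕ :=
  Nat.find (⟨N, tailSum_eq_zero_of_le le_rfl⟩ : ∃ j, tailSum N g j = 0)

def ofGapMarks (N : ℕ) (g : ℕ → ℕ × Bool) : List (ℕ × Bool) :=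
  (List.range (tailLength N g)).map fun j => (tailSum N g j, (g j).2)

section GapMarks

variable {N : ℕ} {g : ℕ → ℕ × Bool}

theorem tailSum_antitone (N : ℕ) (g : ℕ → ℕ × Bool) : Antitone (tailSum N g) :=
  fun _ _ h => sum_le_sum_of_subset (Ico_subset_Ico_left h)

theorem tailSum_eq_add {j : ℕ} (h : j < N) : tailSum N g j = (g j).1 + tailSum N g (j + 1) :=
  sum_eq_sum_Ico_succ_bot h _

theorem lt_tailLength_iff {j : ℕ} : j < tailLength N g ↔ 0 < tailSum N g j := by
  rw [tailLength, Nat.lt_find_iff]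
  exact ⟨fun h => Nat.pos_of_ne_zero (h j le_rfl),
    fun h m hm => (h.trans_le (tailSum_antitone N g hm)).ne'⟩

theorem lt_tailLength {j : ℕ} (hj : j < N) (h : 0 < (g j).1) : j < tailLength N g :=
  lt_tailLength_iff.2 (by rw [tailSum_eq_add hj]; omega)

theorem tailLength_le {M : ℕ} (hg : ∀ i, M ≤ i → (g i).1 = 0) : tailLength N g ≤ M :=
  Nat.find_min' _ (sum_eq_zero fun i hi => hg i (mem_Ico.1 hi).1)

theorem tailLength_le_self : tailLength N g ≤ N :=
  Nat.find_min' _ (tailSum_eq_zero_of_le le_rfl)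

theorem length_ofGapMarks : (ofGapMarks N g).length = tailLength N g := by
  simp [ofGapMarks]

theorem getD_ofGapMarks {j : ℕ} (h : j < tailLength N g) :
    (ofGapMarks N g).getD j (0, false) = (tailSum N g j, (g j).2) := by
  rw [List.getD_eq_getElem _ _ (by rwa [length_ofGapMarks])]
  simp [ofGapMarks]

theorem part_ofGapMarks : part (ofGapMarks N g) = tailSum N g := by
  funext j
  rcases lt_or_ge j (tailLength N g) with h | h
  · rw [part, getD_ofGapMarks h]
  · rw [part, List.getD_eq_default _ _ (by rwa [length_ofGapMarks])]
    by_contra hne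
    exact h.not_gt (lt_tailLength_iff.2 (Nat.pos_of_ne_zero (Ne.symm hne)))

theorem gapMarks_ofGapMarks (hg : IsGapMarks N g) : gapMarks (ofGapMarks N g) = g := by
  funext j
  refine Prod.ext ?_ ?_
  · rw [gapMarks, part_ofGapMarks]
    rcases lt_or_ge j N with h | h
    · rw [tailSum_eq_add h]; omega
    · rw [tailSum_eq_zero_of_le h, tailSum_eq_zero_of_le (h.trans j.le_succ), hg.eq_of_le j h]
  · rcases lt_or_ge j (tailLength N g) with h | h
    · rw [gapMarks, getD_ofGapMarks h]
    · rw [gapMarks, List.getD_eq_default _ _ (by rwa [length_ofGapMarks])]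
      by_contra hmark
      have hmark : (g j).2 = true := by simpa using Ne.symm hmark
      rcases lt_or_ge j N with hj | hj
      · exact h.not_gt (lt_tailLength hj (hg.pos_of_mark j hmark))
      · simp [hg.eq_of_le j hj] at hmark

theorem isOverpartition_ofGapMarks (hg : ∀ j, (g j).2 = true → 0 < (g j).1) :
    IsOverpartition (ofGapMarks N g) := by
  refine ⟨?_, ?_, fun j hj hmark => ?_⟩
  · simpa [ofGapMarks, List.pairwise_map] using
      List.pairwise_lt_range.imp fun h => tailSum_antitone N g h.le
  · simp only [ofGapMarks, List.mem_map, List.mem_range]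
    rintro _ ⟨j, hj, rfl⟩
    exact lt_tailLength_iff.1 hj
  · rw [length_ofGapMarks] at hj
    rw [getD_ofGapMarks (by omega)] at hmark
    have hjN : j < N := by have := @tailLength_le_self N g; omega
    rw [getD_ofGapMarks hj, getD_ofGapMarks (by omega), tailSum_eq_add (j := j) hjN]
    have := hg j hmark
    omega

theorem sum_range_mul_tailSum (c : ℕ → ℕ) :
    ∑ i ∈ range N, c i * tailSum N g i
      = ∑ j ∈ range N, (∑ i ∈ range (j + 1), c i) * (g j).1 := by
  simp only [tailSum, mul_sum, sum_mul]
  exact sum_comm' fun i j => by simp only [mem_range, mem_Ico]; omega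

theorem schmidtSum_ofGapMarks (k : ℕ) :
    schmidtSum k ((ofGapMarks N g).map Prod.fst) = ∑ j ∈ range N, (j / k + 1) * (g j).1 := by
  have hpart (i : ℕ) : ((ofGapMarks N g).map Prod.fst).getD i 0 = tailSum N g i := by
    rw [← part_ofGapMarks]
    exact List.getD_map _ (0, false) Prod.fst
  have hzero : ∀ i ∈ range N, i ∉ range (tailLength N g) →
      (if i % k = 0 then 1 else 0) * tailSum N g i = 0 := fun i _ hi => by
    rw [mem_range, lt_tailLength_iff, not_lt, Nat.le_zero] at hi
    rw [hi, mul_zero]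
  calc schmidtSum k ((ofGapMarks N g).map Prod.fst)
      = ∑ i ∈ range N, (if i % k = 0 then 1 else 0) * tailSum N g i := by
        rw [schmidtSum, List.length_map, length_ofGapMarks,
          ← sum_subset (range_subset_range.2 tailLength_le_self) hzero]
        exact sum_congr rfl fun i _ => by rw [hpart, boole_mul]
    _ = ∑ j ∈ range N, (j / k + 1) * (g j).1 := by
        simp only [sum_range_mul_tailSum, sum_range_succ_boole_mod_eq_zero]

end GapMarks

section Lists

variable {l : List (ℕ × Bool)} {N : ℕ}

theorem part_eq_zero {j : ℕ} (h : l.length ≤ j) : part l j = 0 := by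
  rw [part, List.getD_eq_default _ _ h]

theorem gapMarks_eq_zero {j : ℕ} (h : l.length ≤ j) : gapMarks l j = (0, false) := by
  rw [gapMarks, part_eq_zero h, part_eq_zero (by omega), List.getD_eq_default _ _ h]

theorem countP_snd_eq_sum (h : l.length ≤ N) :
    l.countP (·.2) = ∑ j ∈ range N, if (gapMarks l j).2 then 1 else 0 := by
  induction l generalizing N with
  | nil => simp [gapMarks]
  | cons x l ih =>
    obtain ⟨N, rfl⟩ : ∃ M, N = M + 1 := ⟨N - 1, by simp at h; omega⟩
    rw [sum_range_succ', List.countP_cons, ih (by simpa using h)]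
    simp [gapMarks]

end Lists

end Overpartition

open Overpartition

namespace IsOverpartition

variable {l : List (ℕ × Bool)} {N : ℕ}

theorem part_antitone (hl : IsOverpartition l) : Antitone (part l) := by
  intro i j hij
  rcases lt_or_ge j l.length with hj | hj
  · rcases hij.eq_or_lt with rfl | hij
    · rfl
    have := List.pairwise_iff_getElem.1 hl.1 i j (by simp; omega) (by simpa) hij
    rw [part, part, List.getD_eq_getElem _ _ hj, List.getD_eq_getElem _ _ (hij.trans hj)]
    simpa using this
  · simp [part_eq_zero hj]

theorem part_pos (hl : IsOverpartition l) {j : ℕ} (h : j < l.length) : 0 < part l j := by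
  rw [part, List.getD_eq_getElem _ _ h]
  exact hl.2.1 _ (List.getElem_mem h)

theorem gapMarks_pos (hl : IsOverpartition l) {j : ℕ} (h : j + 1 = l.length) :
    0 < (gapMarks l j).1 := by
  have := hl.part_pos (j := j) (by omega)
  simp [gapMarks, part_eq_zero h.ge, this]

theorem gapMarks_pos_of_mark (hl : IsOverpartition l) {j : ℕ} (hmark : (gapMarks l j).2 = true) :
    0 < (gapMarks l j).1 := by
  rcases lt_or_ge (j + 1) l.length with h | h
  · have := hl.2.2 j h hmark
    simp only [gapMarks, part]
    omega
  · rcases lt_or_ge j l.length with hj | hj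
    · exact hl.gapMarks_pos (by omega)
    · simp [gapMarks_eq_zero hj] at hmark

theorem tailSum_gapMarks (hl : IsOverpartition l) (h : l.length ≤ N) :
    tailSum N (gapMarks l) = part l := by
  funext j
  rcases le_or_gt j N with hj | hj
  · exact (hl.part_antitone.sum_Ico_tsub hj).trans (by rw [part_eq_zero h, Nat.sub_zero])
  · rw [tailSum, Ico_eq_empty_of_le hj.le, sum_empty, part_eq_zero (by omega)]

theorem ofGapMarks_gapMarks (hl : IsOverpartition l) (h : l.length ≤ N) :
    ofGapMarks N (gapMarks l) = l := by
  have hpart := hl.tailSum_gapMarks h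
  have hlen : (ofGapMarks N (gapMarks l)).length = l.length := by
    refine eq_of_forall_lt_iff fun j => ?_
    rw [length_ofGapMarks, lt_tailLength_iff, hpart]
    exact ⟨fun hj => by_contra fun h' => hj.ne' (part_eq_zero (not_lt.1 h')), hl.part_pos⟩
  refine List.ext_getElem hlen fun j h₁ h₂ => ?_
  rw [← List.getD_eq_getElem _ (0, false) h₁, ← List.getD_eq_getElem _ (0, false) h₂,
    getD_ofGapMarks (by rwa [← length_ofGapMarks]), hpart]
  rfl

theorem sum_map_fst_eq (hl : IsOverpartition l) (h : l.length ≤ N) :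
    (l.map Prod.fst).sum = ∑ j ∈ range N, (j + 1) * (gapMarks l j).1 := by
  rw [← schmidtSum_one, ← hl.ofGapMarks_gapMarks h, schmidtSum_ofGapMarks,
    hl.ofGapMarks_gapMarks h]
  simp

end IsOverpartition

namespace Overpartition

def toColumns (k t : ℕ) (l : List (ℕ × Bool)) (i : Fin k) : List (ℕ × Bool) :=
  ofGapMarks t fun j => gapMarks l (j * k + i)

def ofColumns (k t : ℕ) [NeZero k] (α : Fin k → List (ℕ × Bool)) : List (ℕ × Bool) :=
  ofGapMarks (t * k) fun m => gapMarks (α (Nat.divModEquiv k m).2) (Nat.divModEquiv k m).1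

variable {k t : ℕ}

section ToColumns

variable {l : List (ℕ × Bool)}

theorem isGapMarks_column (hl : IsOverpartition l) (h : l.length ≤ t * k) (i : Fin k) :
    IsGapMarks t fun j => gapMarks l (j * k + i) :=
  ⟨fun _ hj => gapMarks_eq_zero
      (h.trans ((Nat.mul_le_mul_right k hj).trans (Nat.le_add_right _ _))),
    fun _ => hl.gapMarks_pos_of_mark⟩

theorem isOverpartition_toColumns (hl : IsOverpartition l) (i : Fin k) :
    IsOverpartition (toColumns k t l i) :=
  isOverpartition_ofGapMarks fun _ => hl.gapMarks_pos_of_mark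

theorem length_toColumns_le (i : Fin k) : (toColumns k t l i).length ≤ t := by
  rw [toColumns, length_ofGapMarks]
  exact tailLength_le_self

theorem length_toColumns_of_length_eq (hl : IsOverpartition l) {i : Fin k}
    (h : l.length = (t - 1) * k + i + 1) : (toColumns k t l i).length = t := by
  refine le_antisymm (length_toColumns_le i) ?_
  rcases t with _ | t
  · exact Nat.zero_le _
  rw [toColumns, length_ofGapMarks]
  exact lt_tailLength (by omega) (hl.gapMarks_pos (by simpa using h.symm))

theorem length_toColumns_lt (ht : 1 ≤ t) {i : Fin k} (h : l.length ≤ (t - 1) * k + i) :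
    (toColumns k t l i).length < t := by
  rw [toColumns, length_ofGapMarks]
  refine (tailLength_le (M := t - 1) fun j hj => ?_).trans_lt (by omega)
  rw [gapMarks_eq_zero (h.trans (by have := Nat.mul_le_mul_right k hj; omega))]

end ToColumns

section OfColumns

variable [NeZero k] {α : Fin k → List (ℕ × Bool)}

theorem isGapMarks_interleave (hα : ∀ i, IsOverpartition (α i)) (hlen : ∀ i, (α i).length ≤ t) :
    IsGapMarks (t * k) fun m => gapMarks (α (Nat.divModEquiv k m).2) (Nat.divModEquiv k m).1 := by
  refine ⟨fun m hm => gapMarks_eq_zero ((hlen _).trans ?_), fun _ => (hα _).gapMarks_pos_of_mark⟩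
  rw [Nat.divModEquiv_apply, Nat.le_div_iff_mul_le (NeZero.pos k)]
  exact hm

theorem isOverpartition_ofColumns (hα : ∀ i, IsOverpartition (α i)) :
    IsOverpartition (ofColumns k t α) :=
  isOverpartition_ofGapMarks fun _ => (hα _).gapMarks_pos_of_mark

theorem toColumns_ofColumns (hα : ∀ i, IsOverpartition (α i)) (hlen : ∀ i, (α i).length ≤ t) :
    toColumns k t (ofColumns k t α) = α := by
  funext i
  rw [toColumns, ofColumns, gapMarks_ofGapMarks (isGapMarks_interleave hα hlen)]
  simp only [Nat.divModEquiv_mul_add]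
  exact (hα i).ofGapMarks_gapMarks (hlen i)

theorem ofColumns_toColumns {l : List (ℕ × Bool)} (hl : IsOverpartition l)
    (h : l.length ≤ t * k) : ofColumns k t (toColumns k t l) = l := by
  simp only [ofColumns, toColumns, gapMarks_ofGapMarks (isGapMarks_column hl h _)]
  have hm (m : ℕ) : (Nat.divModEquiv k m).1 * k + (Nat.divModEquiv k m).2 = m :=
    (Nat.divModEquiv k).symm_apply_apply m
  simp only [hm]
  exact hl.ofGapMarks_gapMarks h

theorem length_ofColumns (hα : ∀ i, IsOverpartition (α i)) (hlen : ∀ i, (α i).length ≤ t)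
    {r : ℕ} (ht : 1 ≤ t) (hr1 : 1 ≤ r) (hrk : r ≤ k)
    (hr : ∀ i : Fin k, i.val = r - 1 → (α i).length = t)
    (hlt : ∀ i : Fin k, r ≤ i.val → (α i).length < t) :
    (ofColumns k t α).length = (t - 1) * k + r := by
  obtain ⟨u, rfl⟩ : ∃ u, t = u + 1 := ⟨t - 1, by omega⟩
  rw [Nat.add_sub_cancel, ofColumns, length_ofGapMarks]
  refine le_antisymm (tailLength_le fun m hm => ?_) ?_
  · set p := Nat.divModEquiv k m
    have hpm : p.1 * k + p.2 = m := (Nat.divModEquiv k).symm_apply_apply m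
    have hpk := p.2.2
    suffices (α p.2).length ≤ p.1 by rw [gapMarks_eq_zero this]
    rcases lt_or_ge (p.2 : ℕ) r with hir | hir
    · refine (hlen _).trans (by_contra fun hj => ?_)
      have := Nat.mul_le_mul_right k (show p.1 ≤ u by omega)
      omega
    · refine Nat.le_of_lt_succ ((hlt _ hir).trans_le (by_contra fun hj => ?_))
      have := Nat.mul_le_mul_right k (show p.1 + 1 ≤ u by omega)
      rw [Nat.succ_mul] at this
      omega
  · have hlast : Nat.divModEquiv k (u * k + (r - 1)) = (u, ⟨r - 1, by omega⟩) :=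
      Nat.divModEquiv_mul_add u ⟨r - 1, by omega⟩
    calc u * k + r = u * k + (r - 1) + 1 := by omega
      _ ≤ _ := lt_tailLength (by rw [Nat.succ_mul]; omega)
        (by rw [hlast]; exact (hα _).gapMarks_pos (hr _ rfl).symm)

theorem schmidtSum_ofColumns (hα : ∀ i, IsOverpartition (α i)) (hlen : ∀ i, (α i).length ≤ t) :
    schmidtSum k ((ofColumns k t α).map Prod.fst) = ∑ i, ((α i).map Prod.fst).sum := by
  rw [ofColumns, schmidtSum_ofGapMarks, sum_range_mul_eq_sum_fin]
  refine sum_congr rfl fun i _ => ?_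
  rw [(hα i).sum_map_fst_eq (hlen i)]
  refine sum_congr rfl fun j _ => ?_
  have hdiv : (j * k + i) / k = j := congrArg Prod.fst (Nat.divModEquiv_mul_add j i)
  rw [hdiv, Nat.divModEquiv_mul_add]

theorem countP_ofColumns (hα : ∀ i, IsOverpartition (α i)) (hlen : ∀ i, (α i).length ≤ t) :
    (ofColumns k t α).countP (·.2) = ∑ i, (α i).countP (·.2) := by
  have hlen' : (ofColumns k t α).length ≤ t * k := by
    rw [ofColumns, length_ofGapMarks]
    exact tailLength_le_self
  rw [countP_snd_eq_sum hlen', ofColumns, gapMarks_ofGapMarks (isGapMarks_interleave hα hlen),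
    sum_range_mul_eq_sum_fin]
  refine sum_congr rfl fun i _ => ?_
  rw [countP_snd_eq_sum (hlen i)]
  simp only [Nat.divModEquiv_mul_add]

end OfColumns

end Overpartition

theorem unrestricted_schmidt_k_overpartition_general (n k t r s : ℕ)
    (ht : 1 ≤ t) (hr1 : 1 ≤ r) (hrk : r ≤ k) :
    Nat.card {α : Fin k → List (ℕ × Bool) //
        (∀ i, IsOverpartition (α i)) ∧
        (∀ i : Fin k, (α i).length ≤ t) ∧
        (∀ i : Fin k, i.val = r - 1 → (α i).length = t) ∧
        (∀ i : Fin k, r ≤ i.val → (α i).length < t) ∧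
        (∑ i, (α i).countP (fun x => x.2)) = s ∧
        ∑ i, ((α i).map Prod.fst).sum = n} =
      Nat.card {l : List (ℕ × Bool) //
        IsOverpartition l ∧ schmidtSum k (l.map Prod.fst) = n ∧
        l.length = (t - 1) * k + r ∧ l.countP (fun x => x.2) = s} := by
  have : NeZero k := ⟨by omega⟩
  have hLk : (t - 1) * k + r ≤ t * k := by
    have := Nat.sub_one_mul t k
    have := Nat.le_mul_of_pos_left k ht
    omega
  refine Nat.card_congr
    { toFun := fun α => ⟨ofColumns k t α.1, ?_⟩
      invFun := fun l => ⟨toColumns k t l.1, ?_⟩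
      left_inv := fun α => Subtype.ext (toColumns_ofColumns α.2.1 α.2.2.1)
      right_inv := fun l => Subtype.ext (ofColumns_toColumns l.2.1 (l.2.2.2.1.trans_le hLk)) }
  · obtain ⟨α, hα, hlen, hr, hlt, hs, hn⟩ := α
    exact ⟨isOverpartition_ofColumns hα,
      by rw [schmidtSum_ofColumns hα hlen, hn], length_ofColumns hα hlen ht hr1 hrk hr hlt,
      by rw [countP_ofColumns hα hlen, hs]⟩
  · obtain ⟨l, hl, hn, hL, hs⟩ := l
    dsimp only
    have hα := isOverpartition_toColumns (k := k) (t := t) hl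
    have hlen := length_toColumns_le (k := k) (t := t) (l := l)
    refine ⟨hα, hlen, fun i hi => length_toColumns_of_length_eq hl (by omega),
      fun i hi => length_toColumns_lt ht (by omega), ?_, ?_⟩
    · rw [← countP_ofColumns hα hlen, ofColumns_toColumns hl (hL.trans_le hLk), hs]
    · rw [← schmidtSum_ofColumns hα hlen, ofColumns_toColumns hl (hL.trans_le hLk), hn]

/-- Unrestricted Schmidt `k`-overpartition theorem: `k`-tuples of overpartitions of
total weight `n` with `s` overlined parts, maximal length `t` attained last at
(1-based) index `r`, are equinumerous with unrestricted Schmidt `k`-overpartitions of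
`n` with `s` overlined parts and length `(t-1)k + r`. -/
theorem unrestricted_schmidt_k_overpartition (n k t r s : ℕ) (hn : 1 ≤ n) (hk : 1 ≤ k)
    (ht : 1 ≤ t) (hs : 1 ≤ s) (hr1 : 1 ≤ r) (hrk : r ≤ k) :
    Nat.card {α : Fin k → List (ℕ × Bool) //
        (∀ i, IsOverpartition (α i)) ∧
        (∀ i : Fin k, (α i).length ≤ t) ∧
        (∀ i : Fin k, i.val = r - 1 → (α i).length = t) ∧
        (∀ i : Fin k, r ≤ i.val → (α i).length < t) ∧
        (∑ i, (α i).countP (fun x => x.2)) = s ∧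
        ∑ i, ((α i).map Prod.fst).sum = n} =
      Nat.card {l : List (ℕ × Bool) //
        IsOverpartition l ∧ schmidtSum k (l.map Prod.fst) = n ∧
        l.length = (t - 1) * k + r ∧ l.countP (fun x => x.2) = s} :=
  unrestricted_schmidt_k_overpartition_general n k t r s ht hr1 hrk
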